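/- arXiv:2410.08380 — 3 statements merged into one kernel-verified Lean document; each statement's English description precedes it below -/
import Mathlib

section
/- Let G = (V,E) be a d-regular graph on n vertices and set λ = λ(G). Then the hopping forcing number satisfies H(G) ≥ max(1 − 2λ/d, (d−λ)/(d+3λ)) · n, equivalently H(G) ≥ (1 − min(2λ/d, 4λ/(d+3λ))) · n. -/
open scoped Classical

/-- One step of the (sequential) hopping forcing process on a graph `G`.  A state is a pair
`(B, H)` where `B` is the current set of blue vertices and `H` is the set of vertices that
have already performed a hop.  In one step a blue vertex `v ∈ B` that has not hopped yet and
all of whose neighbours are blue colours a white vertex `w` at distance exactly two blue. -/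
def HopStep {V : Type*} [DecidableEq V] (G : SimpleGraph V) :
    Finset V × Finset V → Finset V × Finset V → Prop := fun p q =>
  ∃ v w, v ∈ p.1 ∧ v ∉ p.2 ∧ (∀ u, G.Adj v u → u ∈ p.1) ∧ w ∉ p.1 ∧
    G.dist v w = 2 ∧ q = (insert w p.1, insert v p.2)

/-- `B` is a feasible initial set of blue vertices: some hopping forcing process starting
from `B` ends with every vertex blue. -/
def HopFeasible {V : Type*} [Fintype V] [DecidableEq V] (G : SimpleGraph V)
    (B : Finset V) : Prop :=
  ∃ H : Finset V, Relation.ReflTransGen (HopStep G) (B, ∅) (Finset.univ, H)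

/-- The hopping forcing number of `G`: the minimum size of a feasible initial blue set. -/
noncomputable def hopNumber {V : Type*} [Fintype V] [DecidableEq V] (G : SimpleGraph V) : ℕ :=
  sInf {k | ∃ B : Finset V, B.card = k ∧ HopFeasible G B}

/-- The probability, under the uniform distribution over all `d`-regular simple graphs on
the labelled vertex set `Fin n`, that the random graph satisfies the property `P`. -/
noncomputable def regProb (n d : ℕ) (P : SimpleGraph (Fin n) → Prop) : ℝ :=
  (Nat.card {G : SimpleGraph (Fin n) // G.IsRegularOfDegree d ∧ P G} : ℝ) /
    (Nat.card {G : SimpleGraph (Fin n) // G.IsRegularOfDegree d} : ℝ)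

/-- The adjacency matrix of a graph is Hermitian over `ℝ`. -/
lemma adjMatrix_isHermitian {n : ℕ} (G : SimpleGraph (Fin n)) [DecidableRel G.Adj] :
    (SimpleGraph.adjMatrix ℝ G).IsHermitian := by
  ext i j
  simp [Matrix.conjTranspose_apply, SimpleGraph.adj_comm]

/-- `graphLambda G` is `λ(G) = max (|λ₂|, |λₙ|)`, where
`λ₁ ≥ λ₂ ≥ ⋯ ≥ λₙ` are the eigenvalues of the adjacency matrix of `G`
(it is junk, namely `0`, if `G` has fewer than two vertices). -/
noncomputable def graphLambda {n : ℕ} (G : SimpleGraph (Fin n)) : ℝ :=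
  if h : 2 ≤ n then
    -- eigenvalues sorted in nondecreasing order
    let e : Fin n → ℝ :=
      (adjMatrix_isHermitian G).eigenvalues ∘ Tuple.sort (adjMatrix_isHermitian G).eigenvalues
    max |e ⟨n - 2, by omega⟩| |e ⟨0, by omega⟩|
  else 0

/-- `|E(S,T)|`: the number of pairs `(s, t) ∈ S × T` with `s` adjacent to `t`; this counts
every edge between `S \ T` and `T` once and every edge inside `S ∩ T` twice. -/
noncomputable def edgeCount {V : Type*} (G : SimpleGraph V) (S T : Finset V) : ℕ :=
  ∑ s ∈ S, ∑ t ∈ T, if G.Adj s t then 1 else 0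

/-!
The `i`-th hopping vertex `vᵢ` has only blue neighbours when it hops, while every later target
`uⱼ` (`j ≥ i`) is still white, so `vᵢ` and `uⱼ` are never adjacent. A feasible set `B` needs
`k = n - |B|` hops; splitting them in the middle gives a set `S` of `⌈k/2⌉` hoppers and a set `T`
of `⌊k/2⌋ + 1` targets with no edge between them. If `λ < d`, the expander mixing lemma then
gives `d² |S| |T| ≤ λ² (n - |S|)(n - |T|)`, i.e. `d k ≤ λ (2n - k - 1)`; either way
`(d + λ) k ≤ 2 λ n`, and both bounds follow from `|B| = n - k`.
-/

open Finset Matrix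

lemma OrthonormalBasis.dotProduct_eq_sum {ι κ : Type*} [Fintype ι] [Fintype κ]
    (b : OrthonormalBasis κ ℝ (EuclideanSpace ℝ ι)) (x y : ι → ℝ) :
    x ⬝ᵥ y = ∑ j, (⇑(b j) ⬝ᵥ x) * (⇑(b j) ⬝ᵥ y) := by
  have := b.sum_inner_mul_inner (WithLp.toLp 2 x) (WithLp.toLp 2 y)
  simp only [EuclideanSpace.inner_eq_star_dotProduct, star_trivial] at this
  rw [dotProduct_comm, ← this]
  simp only [dotProduct_comm y]

namespace Matrix.IsHermitian

variable {ι : Type*} [Fintype ι] [DecidableEq ι] {A : Matrix ι ι ℝ} (hA : A.IsHermitian)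

lemma eigenvectorBasis_dotProduct_mulVec (j : ι) (y : ι → ℝ) :
    ⇑(hA.eigenvectorBasis j) ⬝ᵥ (A *ᵥ y) = hA.eigenvalues j * (⇑(hA.eigenvectorBasis j) ⬝ᵥ y) := by
  have hAt : Aᵀ = A := by simpa [conjTranspose_eq_transpose_of_trivial] using hA.eq
  rw [dotProduct_mulVec, ← mulVec_transpose, hAt, hA.mulVec_eigenvectorBasis, smul_dotProduct,
    smul_eq_mul]

lemma dotProduct_mulVec_eq_sum (x y : ι → ℝ) :
    x ⬝ᵥ (A *ᵥ y) = ∑ j, hA.eigenvalues j *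
      ((⇑(hA.eigenvectorBasis j) ⬝ᵥ x) * (⇑(hA.eigenvectorBasis j) ⬝ᵥ y)) := by
  rw [hA.eigenvectorBasis.dotProduct_eq_sum]
  refine Finset.sum_congr rfl fun j _ => ?_
  rw [eigenvectorBasis_dotProduct_mulVec]
  ring

lemma sq_dotProduct_mulVec_le {lam : ℝ} (x y : ι → ℝ)
    (hx : ∀ j, ⇑(hA.eigenvectorBasis j) ⬝ᵥ x ≠ 0 → |hA.eigenvalues j| ≤ lam) :
    (x ⬝ᵥ (A *ᵥ y)) ^ 2 ≤ lam ^ 2 * (x ⬝ᵥ x) * (y ⬝ᵥ y) := by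
  set p : ι → ℝ := fun j => ⇑(hA.eigenvectorBasis j) ⬝ᵥ x
  set q : ι → ℝ := fun j => ⇑(hA.eigenvectorBasis j) ⬝ᵥ y
  have hterm : ∀ j, (hA.eigenvalues j * p j) ^ 2 ≤ lam ^ 2 * p j ^ 2 := by
    intro j
    by_cases hp : p j = 0
    · simp [hp]
    · rw [mul_pow]
      exact mul_le_mul_of_nonneg_right (sq_le_sq.mpr ((hx j hp).trans (le_abs_self lam)))
        (sq_nonneg _)
  calc (x ⬝ᵥ (A *ᵥ y)) ^ 2 = (∑ j, (hA.eigenvalues j * p j) * q j) ^ 2 := by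
        rw [hA.dotProduct_mulVec_eq_sum]
        simp only [p, q, mul_assoc]
    _ ≤ (∑ j, (hA.eigenvalues j * p j) ^ 2) * ∑ j, q j ^ 2 :=
        Finset.sum_mul_sq_le_sq_mul_sq _ _ _
    _ ≤ (∑ j, lam ^ 2 * p j ^ 2) * ∑ j, q j ^ 2 := by
        gcongr with j
        exact hterm j
    _ = lam ^ 2 * (x ⬝ᵥ x) * (y ⬝ᵥ y) := by
        rw [← Finset.mul_sum, hA.eigenvectorBasis.dotProduct_eq_sum x x,
          hA.eigenvectorBasis.dotProduct_eq_sum y y]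
        simp only [p, q, sq]

lemma eigenvectorBasis_dotProduct_eq_zero {μ : ℝ} {u : ι → ℝ} (hu : A *ᵥ u = μ • u) {j : ι}
    (hj : hA.eigenvalues j ≠ μ) : ⇑(hA.eigenvectorBasis j) ⬝ᵥ u = 0 := by
  have h := hA.eigenvectorBasis_dotProduct_mulVec j u
  rw [hu, dotProduct_smul, smul_eq_mul] at h
  exact (mul_eq_mul_right_iff.mp h).resolve_left (Ne.symm hj)

lemma sq_dotProduct_mulVec_le_of_dotProduct_eq_zero {μ lam : ℝ} {u : ι → ℝ}
    (hu : A *ᵥ u = μ • u) (hu0 : u ≠ 0) (j₁ : ι)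
    (hbound : ∀ j, j ≠ j₁ → |hA.eigenvalues j| ≤ lam) (hlam : lam < |μ|)
    (x y : ι → ℝ) (hx : x ⬝ᵥ u = 0) :
    (x ⬝ᵥ (A *ᵥ y)) ^ 2 ≤ lam ^ 2 * (x ⬝ᵥ x) * (y ⬝ᵥ y) := by
  set b := hA.eigenvectorBasis
  have hsupp : ∀ j, j ≠ j₁ → ⇑(b j) ⬝ᵥ u = 0 := fun j hj =>
    hA.eigenvectorBasis_dotProduct_eq_zero hu fun h => by
      have := hbound j hj; rw [h] at this; linarith
  have hsum : ∀ z : ι → ℝ, z ⬝ᵥ u = (⇑(b j₁) ⬝ᵥ z) * (⇑(b j₁) ⬝ᵥ u) := fun z => by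
    rw [b.dotProduct_eq_sum, Finset.sum_eq_single j₁ (fun j _ hj => by rw [hsupp j hj, mul_zero])
      (by simp)]
  have hu₁ : ⇑(b j₁) ⬝ᵥ u ≠ 0 := by
    intro h
    apply hu0
    rw [← dotProduct_self_eq_zero, hsum, h, mul_zero]
  refine hA.sq_dotProduct_mulVec_le x y fun j hj => ?_
  by_cases h : j = j₁
  · subst h
    rw [hsum x, mul_eq_zero] at hx
    exact absurd (hx.resolve_right hu₁) hj
  · exact hbound j h

end Matrix.IsHermitian

lemma Tuple.apply_sort_zero_le {α : Type*} [LinearOrder α] {n : ℕ} (hn : 0 < n)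
    (f : Fin n → α) (j : Fin n) : f (Tuple.sort f ⟨0, hn⟩) ≤ f j := by
  simpa using
    Tuple.monotone_sort f (show (⟨0, hn⟩ : Fin n) ≤ (Tuple.sort f).symm j from Nat.zero_le _)

lemma Tuple.apply_le_apply_sort_of_ne_last {α : Type*} [LinearOrder α] {n : ℕ} (hn : 2 ≤ n)
    (f : Fin n → α) {j : Fin n} (hj : j ≠ Tuple.sort f ⟨n - 1, by omega⟩) :
    f j ≤ f (Tuple.sort f ⟨n - 2, by omega⟩) := by
  have hlt : ((Tuple.sort f).symm j : ℕ) ≠ n - 1 := fun h =>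
    hj (by rw [← Equiv.apply_symm_apply (Tuple.sort f) j]; congr 1; exact Fin.ext h)
  have hle : (Tuple.sort f).symm j ≤ ⟨n - 2, by omega⟩ := by
    rw [Fin.le_def]; have := ((Tuple.sort f).symm j).isLt; dsimp only; omega
  simpa using Tuple.monotone_sort f hle

lemma mul_add_sub_one_le_of_sq_mul_mul_le {d l n s t : ℝ} (hl : 0 ≤ l) (hs : s ≤ n) (ht : t ≤ n)
    (hst : s ≤ t + 1) (hts : t ≤ s + 1) (h1 : 1 ≤ s + t)
    (h : d ^ 2 * s * t ≤ l ^ 2 * (n - s) * (n - t)) :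
    d * (s + t - 1) ≤ l * (2 * n - s - t) := by
  have hRHS : 0 ≤ l * (2 * n - s - t) := mul_nonneg hl (by linarith)
  suffices (d * (s + t - 1)) ^ 2 ≤ (l * (2 * n - s - t)) ^ 2 from
    (abs_le_of_sq_le_sq' this hRHS).2
  -- `4st ≥ (s + t - 1)²` and `4(n - s)(n - t) ≤ (2n - s - t)²`
  calc (d * (s + t - 1)) ^ 2 ≤ d ^ 2 * (4 * s * t) := by
        rw [mul_pow]; gcongr; nlinarith
    _ ≤ l ^ 2 * (4 * (n - s) * (n - t)) := by linarith
    _ ≤ (l * (2 * n - s - t)) ^ 2 := by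
        rw [mul_pow]; gcongr; nlinarith [sq_nonneg (s - t)]

namespace SimpleGraph

lemma not_adj_of_dist_eq_two {V : Type*} {G : SimpleGraph V} {v w : V}
    (h : G.dist v w = 2) : ¬ G.Adj v w := fun hadj => by
  rw [dist_eq_one_iff_adj.mpr hadj] at h
  exact absurd h (by decide)

lemma IsRegularOfDegree.eq_bot {V : Type*} [Fintype V] {G : SimpleGraph V}
    [DecidableRel G.Adj] (h : G.IsRegularOfDegree 0) : G = ⊥ :=
  eq_bot_iff_forall_not_adj.mpr fun a b hab =>
    (G.degree_pos_iff_exists_adj a).mpr ⟨b, hab⟩ |>.ne' (h a)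

lemma adjMatrix_mulVec_one {V : Type*} [Fintype V] (G : SimpleGraph V) [DecidableRel G.Adj]
    {d : ℕ} (hreg : G.IsRegularOfDegree d) : G.adjMatrix ℝ *ᵥ 1 = (d : ℝ) • 1 := by
  ext v
  simpa using G.adjMatrix_mulVec_const_apply_of_regular hreg (a := (1 : ℝ)) (v := v)

section

variable {V : Type*} [Fintype V] [DecidableEq V]

noncomputable def centeredIndicator (S : Finset V) : V → ℝ :=
  (Fintype.card V : ℝ) • (fun i => if i ∈ S then 1 else 0) - (#S : ℝ) • 1

lemma indicator_dotProduct_one (S : Finset V) :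
    (fun i => if i ∈ S then (1 : ℝ) else 0) ⬝ᵥ 1 = #S := by
  simp [dotProduct]

lemma indicator_dotProduct_self (S : Finset V) :
    (fun i => if i ∈ S then (1 : ℝ) else 0) ⬝ᵥ (fun i => if i ∈ S then (1 : ℝ) else 0) = #S := by
  simp [dotProduct]

lemma centeredIndicator_dotProduct_one (S : Finset V) : centeredIndicator S ⬝ᵥ 1 = 0 := by
  simp only [centeredIndicator, sub_dotProduct, smul_dotProduct, indicator_dotProduct_one,
    one_dotProduct_one, smul_eq_mul]
  ring

lemma centeredIndicator_dotProduct_self (S : Finset V) :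
    centeredIndicator S ⬝ᵥ centeredIndicator S =
      Fintype.card V * (#S * (Fintype.card V - #S)) := by
  conv_lhs => enter [2]; rw [centeredIndicator]
  rw [dotProduct_sub, dotProduct_smul, dotProduct_smul, centeredIndicator_dotProduct_one,
    centeredIndicator, sub_dotProduct, smul_dotProduct, smul_dotProduct, dotProduct_comm 1,
    indicator_dotProduct_one, indicator_dotProduct_self]
  simp only [smul_eq_mul]; ring

variable (G : SimpleGraph V) [DecidableRel G.Adj]

lemma indicator_dotProduct_adjMatrix_mulVec_indicator (S T : Finset V) :
    (fun i => if i ∈ S then (1 : ℝ) else 0) ⬝ᵥ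
      (G.adjMatrix ℝ *ᵥ fun i => if i ∈ T then (1 : ℝ) else 0) = edgeCount G S T := by
  simp [dotProduct, ite_mul, Finset.sum_ite_mem, mulVec, edgeCount, adjMatrix_apply]

lemma centeredIndicator_dotProduct_adjMatrix_mulVec {d : ℕ} (hreg : G.IsRegularOfDegree d)
    (S T : Finset V) :
    centeredIndicator S ⬝ᵥ (G.adjMatrix ℝ *ᵥ centeredIndicator T) =
      Fintype.card V * (Fintype.card V * edgeCount G S T - d * #S * #T) := by
  have h1T : (1 : V → ℝ) ⬝ᵥ (G.adjMatrix ℝ *ᵥ fun i => if i ∈ T then 1 else 0) = d * #T := by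
    rw [dotProduct_mulVec, ← mulVec_transpose, transpose_adjMatrix, G.adjMatrix_mulVec_one hreg,
      smul_dotProduct, dotProduct_comm, indicator_dotProduct_one, smul_eq_mul]
  conv_lhs => enter [2, 2]; rw [centeredIndicator]
  rw [mulVec_sub, mulVec_smul, mulVec_smul, G.adjMatrix_mulVec_one hreg, dotProduct_sub,
    dotProduct_smul, dotProduct_smul, dotProduct_smul, centeredIndicator_dotProduct_one,
    centeredIndicator, sub_dotProduct, smul_dotProduct, smul_dotProduct,
    indicator_dotProduct_adjMatrix_mulVec_indicator, h1T]
  simp only [smul_eq_mul]; ring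

end

variable {n d : ℕ} {G : SimpleGraph (Fin n)}

lemma graphLambda_nonneg (hn : 2 ≤ n) : 0 ≤ graphLambda G := by
  rw [graphLambda, dif_pos hn]
  exact (abs_nonneg _).trans (le_max_left _ _)

lemma exists_abs_eigenvalues_le_graphLambda (hn : 2 ≤ n) :
    ∃ j₁, ∀ j, j ≠ j₁ → |(adjMatrix_isHermitian G).eigenvalues j| ≤ graphLambda G := by
  set e := (adjMatrix_isHermitian G).eigenvalues
  refine ⟨Tuple.sort e ⟨n - 1, by omega⟩, fun j hj => ?_⟩
  rw [graphLambda, dif_pos hn, max_comm]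
  exact abs_le_max_abs_abs (Tuple.apply_sort_zero_le (by omega) e j)
    (Tuple.apply_le_apply_sort_of_ne_last hn e hj)

theorem expander_mixing (hn : 2 ≤ n) (hreg : G.IsRegularOfDegree d)
    (hl : graphLambda G < d) (S T : Finset (Fin n)) :
    ((n : ℝ) * edgeCount G S T - d * #S * #T) ^ 2 ≤
      graphLambda G ^ 2 * (#S * (n - #S)) * (#T * (n - #T)) := by
  obtain ⟨j₁, hj₁⟩ := exists_abs_eigenvalues_le_graphLambda (G := G) hn
  have key := (adjMatrix_isHermitian G).sq_dotProduct_mulVec_le_of_dotProduct_eq_zero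
    (G.adjMatrix_mulVec_one hreg) (fun h => by simpa using congrFun h ⟨0, by omega⟩) j₁ hj₁
    (by rwa [abs_of_nonneg (Nat.cast_nonneg d)]) (centeredIndicator S) (centeredIndicator T)
    (centeredIndicator_dotProduct_one S)
  simp only [G.centeredIndicator_dotProduct_adjMatrix_mulVec hreg,
    centeredIndicator_dotProduct_self, Fintype.card_fin] at key
  refine le_of_mul_le_mul_left ?_ (by positivity : (0 : ℝ) < n ^ 2)
  linarith

lemma sq_mul_card_mul_card_le_of_forall_not_adj (hn : 2 ≤ n) (hreg : G.IsRegularOfDegree d)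
    (hl : graphLambda G < d) {S T : Finset (Fin n)} (hST : ∀ s ∈ S, ∀ t ∈ T, ¬ G.Adj s t) :
    (d : ℝ) ^ 2 * #S * #T ≤ graphLambda G ^ 2 * (n - #S) * (n - #T) := by
  have he : edgeCount G S T = 0 :=
    Finset.sum_eq_zero fun s hs => Finset.sum_eq_zero fun t ht => if_neg (hST s hs t ht)
  have key := expander_mixing hn hreg hl S T
  rw [he, Nat.cast_zero, mul_zero, zero_sub, neg_sq] at key
  have hSn : (#S : ℝ) ≤ n := by exact_mod_cast S.card_le_univ.trans_eq (Fintype.card_fin n)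
  have hTn : (#T : ℝ) ≤ n := by exact_mod_cast T.card_le_univ.trans_eq (Fintype.card_fin n)
  rcases (by positivity : (0 : ℝ) ≤ #S * #T).eq_or_lt with h0 | hpos
  · rw [mul_assoc, ← h0, mul_zero]
    have := sub_nonneg.mpr hSn; have := sub_nonneg.mpr hTn; positivity
  · exact le_of_mul_le_mul_left (by linarith) hpos

lemma add_graphLambda_mul_le_of_forall_le_not_adj (hn : 2 ≤ n) (hreg : G.IsRegularOfDegree d)
    {k : ℕ} {v u : Fin k → Fin n} (hv : Function.Injective v) (hu : Function.Injective u)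
    (hvu : ∀ i j, i ≤ j → ¬ G.Adj (v i) (u j)) :
    ((d : ℝ) + graphLambda G) * k ≤ 2 * graphLambda G * n := by
  have hl0 : 0 ≤ graphLambda G := graphLambda_nonneg hn
  have hkn : (k : ℝ) ≤ n := by simpa using Fintype.card_le_of_injective v hv
  by_cases hl : graphLambda G < d
  swap
  · nlinarith
  rcases Nat.eq_zero_or_pos k with rfl | hk
  · simp only [Nat.cast_zero, mul_zero]; positivity
  -- the first half of the hoppers cannot see the second half of the targets
  set m : Fin k := ⟨(k - 1) / 2, by omega⟩
  set S := (Iic m).image v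
  set T := (Ici m).image u
  have hS : #S = (k - 1) / 2 + 1 := by rw [card_image_of_injective _ hv, Fin.card_Iic]
  have hT : #T = k - (k - 1) / 2 := by rw [card_image_of_injective _ hu, Fin.card_Ici]
  have hST : ∀ s ∈ S, ∀ t ∈ T, ¬ G.Adj s t := by
    simp only [S, T, mem_image, mem_Iic, mem_Ici]
    rintro _ ⟨i, hi, rfl⟩ _ ⟨j, hj, rfl⟩
    exact hvu i j (hi.trans hj)
  have hsum : (#S : ℝ) + #T = k + 1 := by rw [hS, hT]; norm_cast; omega
  have key := mul_add_sub_one_le_of_sq_mul_mul_le hl0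
    (by exact_mod_cast S.card_le_univ.trans_eq (Fintype.card_fin n))
    (by exact_mod_cast T.card_le_univ.trans_eq (Fintype.card_fin n))
    (by rw [hS, hT]; norm_cast; omega) (by rw [hS, hT]; norm_cast; omega) (by linarith)
    (sq_mul_card_mul_card_le_of_forall_not_adj hn hreg hl hST)
  have hk' : (d : ℝ) * k ≤ graphLambda G * (2 * n - k - 1) := by
    convert key using 2 <;> linarith
  nlinarith

end SimpleGraph

lemma exists_hop_sequence_of_reflTransGen {V : Type*} [Fintype V] [DecidableEq V]
    {G : SimpleGraph V} {p : Finset V × Finset V} {E : Finset V}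
    (h : Relation.ReflTransGen (HopStep G) p (univ, E)) :
    ∃ k, #p.1 + k = Fintype.card V ∧ ∃ v u : Fin k → V,
      Function.Injective v ∧ Function.Injective u ∧ (∀ i j, i ≤ j → ¬ G.Adj (v i) (u j)) ∧
      (∀ i, v i ∉ p.2) ∧ ∀ j, u j ∉ p.1 := by
  induction h using Relation.ReflTransGen.head_induction_on with
  | refl =>
    exact ⟨0, by simp, Fin.elim0, Fin.elim0, fun i => i.elim0, fun i => i.elim0,
      fun i => i.elim0, fun i => i.elim0, fun i => i.elim0⟩
  | @head a c hstep _ ih =>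
    obtain ⟨v₀, w₀, hv₀, hv₀H, hN, hw₀, hdist, rfl⟩ := hstep
    obtain ⟨k, hk, v, u, hv, hu, hvu, hvH, huB⟩ := ih
    have hvH' : ∀ i, v i ≠ v₀ ∧ v i ∉ a.2 := fun i => by simpa using hvH i
    have huB' : ∀ j, u j ≠ w₀ ∧ u j ∉ a.1 := fun j => by simpa using huB j
    refine ⟨k + 1, by rw [card_insert_of_notMem hw₀] at hk; omega, Fin.cons v₀ v, Fin.cons w₀ u,
      Fin.cons_injective_of_injective (fun ⟨i, hi⟩ => (hvH' i).1 hi) hv,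
      Fin.cons_injective_of_injective (fun ⟨j, hj⟩ => (huB' j).1 hj) hu, ?_,
      Fin.cases hv₀H fun i => (hvH' i).2, Fin.cases hw₀ fun j => (huB' j).2⟩
    intro i j hij
    cases i using Fin.cases with
    | zero =>
      cases j using Fin.cases with
      | zero => exact SimpleGraph.not_adj_of_dist_eq_two hdist
      | succ j => exact fun hadj => (huB' j).2 (hN _ hadj)
    | succ i =>
      cases j using Fin.cases with
      | zero => exact absurd hij (Fin.succ_pos i).not_ge
      | succ j => exact hvu i j (Fin.succ_le_succ_iff.mp hij)

lemma HopFeasible.eq_univ_of_bot {V : Type*} [Fintype V] [DecidableEq V] {B : Finset V}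
    (h : HopFeasible (⊥ : SimpleGraph V) B) : B = univ := by
  obtain ⟨H, hH⟩ := h
  have hstuck : ∀ q, ¬ HopStep (⊥ : SimpleGraph V) (B, ∅) q :=
    fun q ⟨_, _, _, _, _, _, hdist, _⟩ => by simp [SimpleGraph.dist_bot] at hdist
  exact (congrArg Prod.fst ((Relation.reflTransGen_iff_eq hstuck).mp hH)).symm

lemma exists_hopFeasible_card_eq_hopNumber {V : Type*} [Fintype V] [DecidableEq V]
    (G : SimpleGraph V) : ∃ B : Finset V, #B = hopNumber G ∧ HopFeasible G B :=
  Nat.sInf_mem (s := {k | ∃ B : Finset V, #B = k ∧ HopFeasible G B})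
    ⟨_, univ, rfl, ∅, Relation.ReflTransGen.refl⟩

lemma max_mul_le_and_one_sub_min_mul_le {d l n b k : ℝ} (hd : 0 ≤ d) (hl : 0 ≤ l) (hb : 0 ≤ b)
    (hk : 0 ≤ k) (hbk : b + k = n) (hkey : (d + l) * k ≤ 2 * l * n) (hd0 : d = 0 → k = 0) :
    max (1 - 2 * l / d) ((d - l) / (d + 3 * l)) * n ≤ b ∧
      (1 - min (2 * l / d) (4 * l / (d + 3 * l))) * n ≤ b := by
  have hn : 0 ≤ n := by linarith
  have h2 : k ≤ 2 * l / d * n := by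
    rcases hd.eq_or_lt with rfl | hd
    · simp [hd0 rfl]
    · rw [div_mul_eq_mul_div, le_div_iff₀ hd]; nlinarith
  have h4 : k ≤ 4 * l / (d + 3 * l) * n ∧ (d - l) / (d + 3 * l) ≤ 1 - 4 * l / (d + 3 * l) := by
    rcases (by positivity : 0 ≤ d + 3 * l).eq_or_lt with h0 | hpos
    · rw [← h0, hd0 (by linarith)]; simp
    · refine ⟨?_, le_of_eq ?_⟩
      · rw [div_mul_eq_mul_div, le_div_iff₀ hpos]; nlinarith
      · rw [eq_sub_iff_add_eq, ← add_div, div_eq_one_iff_eq hpos.ne']; ring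
  have hmin : (1 - min (2 * l / d) (4 * l / (d + 3 * l))) * n ≤ b := by
    rw [sub_mul, min_mul_of_nonneg _ _ hn]
    have := le_min h2 h4.1
    linarith
  refine ⟨le_trans ?_ hmin, hmin⟩
  rw [← max_sub_sub_left]
  exact mul_le_mul_of_nonneg_right (max_le_max le_rfl h4.2) hn

/-- For a $d$-regular graph $G$ on $n$ vertices with
$\lambda = \lambda(G)$,
$H(G) \ge \max\left(1-\frac{2\lambda}{d}, \frac{d-\lambda}{d+3\lambda}\right) n
 = \left(1 - \min\left(\frac{2\lambda}{d}, \frac{4\lambda}{d+3\lambda}\right)\right) n$. -/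
theorem hopNumber_lower_of_expansion {n d : ℕ} (hn : 2 ≤ n) (G : SimpleGraph (Fin n))
    (hreg : G.IsRegularOfDegree d) :
    max (1 - 2 * graphLambda G / d)
        (((d : ℝ) - graphLambda G) / ((d : ℝ) + 3 * graphLambda G)) * n
      ≤ (hopNumber G : ℝ) ∧
    (1 - min (2 * graphLambda G / d)
        (4 * graphLambda G / ((d : ℝ) + 3 * graphLambda G))) * n
      ≤ (hopNumber G : ℝ) := by
  obtain ⟨B, hB, E, hrun⟩ := exists_hopFeasible_card_eq_hopNumber G
  obtain ⟨k, hk, v, u, hv, hu, hvu, -, -⟩ := exists_hop_sequence_of_reflTransGen hrun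
  rw [Fintype.card_fin] at hk
  -- for `d = 0` the bound reads `n ≤ H(G)` (as `2λ / 0 = 0`): an edgeless graph admits no hop
  have hd0 : d = 0 → k = 0 := by
    rintro rfl
    have hfeas : HopFeasible G B := ⟨E, hrun⟩
    rw [hreg.eq_bot] at hfeas
    rw [hfeas.eq_univ_of_bot, card_univ, Fintype.card_fin] at hk
    omega
  rw [← hB]
  exact max_mul_le_and_one_sub_min_mul_le (Nat.cast_nonneg d) (SimpleGraph.graphLambda_nonneg hn)
    (Nat.cast_nonneg _) (Nat.cast_nonneg k) (by exact_mod_cast hk)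
    (SimpleGraph.add_graphLambda_mul_le_of_forall_le_not_adj hn hreg hv hu hvu)
    (fun hd => by exact_mod_cast hd0 (by exact_mod_cast hd))
end

section
/- For every integer n ≥ 3, the hopping forcing number of the cycle graph C_n on n vertices equals 3. -/
open scoped Classical

/-!
The first vertex to hop needs itself and all its neighbours blue, so every feasible set other
than the whole vertex set has more than `minDegree` vertices; on a cycle with at least three
vertices this gives at least three. Conversely, if `0, 1, …, k - 1` are blue, the vertex `k - 2`
has both neighbours blue and hops onto `k`; since each vertex hops only once and `k - 2` is new at
every step, the blue arc `0, 1, 2` grows around the whole cycle.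
-/

open SimpleGraph Finset

section HopForcing

variable {V : Type*} [Fintype V] [DecidableEq V] {G : SimpleGraph V} {B : Finset V}

lemma hopFeasible_univ (G : SimpleGraph V) : HopFeasible G univ := ⟨∅, .refl⟩

lemma hopNumber_le_card (hB : HopFeasible G B) : hopNumber G ≤ #B :=
  Nat.sInf_le ⟨B, rfl, hB⟩

lemma le_hopNumber {k : ℕ} (h : ∀ B, HopFeasible G B → k ≤ #B) : k ≤ hopNumber G := by
  have hne : {k | ∃ B : Finset V, #B = k ∧ HopFeasible G B}.Nonempty :=
    ⟨_, univ, rfl, hopFeasible_univ G⟩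
  obtain ⟨B, hB, hf⟩ := Nat.sInf_mem hne
  rw [hopNumber, ← hB]
  exact h B hf

lemma HopFeasible.exists_forall_adj_mem (hB : HopFeasible G B) (hne : B ≠ univ) :
    ∃ v ∈ B, ∀ u, G.Adj v u → u ∈ B := by
  obtain ⟨H, hrel⟩ := hB
  rcases hrel.cases_head with heq | ⟨_, ⟨v, -, hv, -, hnbr, -⟩, -⟩
  · exact absurd (congrArg Prod.fst heq) hne
  · exact ⟨v, hv, hnbr⟩

lemma HopFeasible.minDegree_lt_card [DecidableRel G.Adj] (hB : HopFeasible G B)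
    (hne : B ≠ univ) : G.minDegree < #B := by
  obtain ⟨v, hv, hnbr⟩ := hB.exists_forall_adj_mem hne
  have hsub : insert v (G.neighborFinset v) ⊆ B :=
    insert_subset hv fun u hu ↦ hnbr u ((G.mem_neighborFinset v u).mp hu)
  calc G.minDegree ≤ G.degree v := G.minDegree_le_degree v
    _ < #(insert v (G.neighborFinset v)) := by
      rw [card_insert_of_notMem (G.notMem_neighborFinset_self v), card_neighborFinset_eq_degree]
      exact Nat.lt_succ_self _
    _ ≤ #B := card_le_card hsub

lemma min_card_minDegree_succ_le_hopNumber [DecidableRel G.Adj] :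
    min (Fintype.card V) (G.minDegree + 1) ≤ hopNumber G := by
  refine le_hopNumber fun B hB ↦ ?_
  by_cases hne : B = univ
  · exact hne ▸ (min_le_left _ _).trans (card_univ (α := V)).ge
  · exact (min_le_right _ _).trans (hB.minDegree_lt_card hne)

end HopForcing

lemma SimpleGraph.dist_eq_two {V : Type*} {G : SimpleGraph V} {u v w : V} (huw : u ≠ w)
    (hnadj : ¬G.Adj u w) (huv : G.Adj u v) (hvw : G.Adj v w) : G.dist u w = 2 := by
  rw [SimpleGraph.dist, ENat.toNat_eq_iff two_ne_zero]
  exact edist_eq_two_iff.mpr ⟨huw, hnadj, v, G.mem_commonNeighbors.mpr ⟨huv, hvw.symm⟩⟩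

lemma two_le_minDegree_cycleGraph {n : ℕ} (hn : 3 ≤ n) : 2 ≤ (cycleGraph n).minDegree := by
  obtain ⟨m, rfl⟩ := Nat.exists_eq_add_of_le' hn
  exact le_minDegree_of_forall_le_degree _ _ fun _ ↦ cycleGraph_degree_three_le.ge

section CycleHopping

variable {m : ℕ}

lemma cycleGraph_adj_add_one (v : Fin (m + 2)) : (cycleGraph (m + 2)).Adj v (v + 1) :=
  cycleGraph_adj.mpr (.inr (add_sub_cancel_left v 1))

lemma cycleGraph_dist_add_two (v : Fin (m + 4)) : (cycleGraph (m + 4)).dist v (v + 2) = 2 := by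
  have hne : v ≠ v + 2 := by
    rw [ne_eq, left_eq_add, Fin.ext_iff]
    simp only [Fin.coe_ofNat_eq_mod]
    rw [Nat.zero_mod, Nat.mod_eq_of_lt (by omega)]
    omega
  have hnadj : ¬(cycleGraph (m + 4)).Adj v (v + 2) := by
    rw [cycleGraph_adj, sub_add_eq_sub_sub, sub_self, zero_sub, add_sub_cancel_left,
      neg_eq_iff_eq_neg, Fin.ext_iff, Fin.ext_iff]
    simp only [Fin.coe_ofNat_eq_mod, Fin.coe_neg_one, Nat.one_mod]
    rw [Nat.mod_eq_of_lt (by omega)]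
    omega
  refine dist_eq_two hne hnadj (cycleGraph_adj_add_one v) ?_
  rw [show v + 2 = v + 1 + 1 by abel]
  exact cycleGraph_adj_add_one (v + 1)

lemma cycleGraph_hopStep {k : ℕ} (hk3 : 3 ≤ k) (hk : k < m + 4) {H : Finset (Fin (m + 4))}
    (hH : ∀ i ∈ H, (i : ℕ) + 3 ≤ k) :
    HopStep (cycleGraph (m + 4)) (({i | (i : ℕ) < k} : Finset (Fin (m + 4))), H)
      (({i | (i : ℕ) < k + 1} : Finset (Fin (m + 4))), insert ⟨k - 2, by omega⟩ H) := by
  let v : Fin (m + 4) := ⟨k - 2, by omega⟩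
  have hv : (v : ℕ) = k - 2 := rfl
  have hv_pred : ((v - 1 : Fin (m + 4)) : ℕ) = k - 3 := by
    rw [Fin.coe_sub_one, if_neg (Fin.ne_of_val_ne (by rw [hv, Fin.val_zero]; omega))]
    omega
  have hv_succ : ((v + 1 : Fin (m + 4)) : ℕ) = k - 1 := by
    rw [Fin.val_add_one_of_lt' (by omega)]
    omega
  have hv_two : ((v + 2 : Fin (m + 4)) : ℕ) = k := by
    rw [show v + 2 = v + 1 + 1 by abel, Fin.val_add_one_of_lt' (by rw [hv_succ]; omega),
      hv_succ]
    omega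
  refine ⟨v, v + 2, ?_, fun hvH ↦ ?_, fun u hu ↦ ?_, ?_, cycleGraph_dist_add_two v, ?_⟩
  · rw [mem_filter_univ]; omega
  · have := hH v hvH; omega
  · have hu : u ∈ (cycleGraph (m + 2 + 2)).neighborSet v := hu
    rw [cycleGraph_neighborSet] at hu
    rcases hu with rfl | rfl <;> rw [mem_filter_univ] <;> omega
  · rw [mem_filter_univ, hv_two]; exact lt_irrefl k
  · ext i
    · simp only [mem_filter_univ, mem_insert, Fin.ext_iff, hv_two]; omega
    · rfl

lemma cycleGraph_reflTransGen_hopStep {k : ℕ} (hk3 : 3 ≤ k) (hk : k ≤ m + 4) :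
    ∃ H : Finset (Fin (m + 4)), (∀ i ∈ H, (i : ℕ) + 3 ≤ k) ∧
      Relation.ReflTransGen (HopStep (cycleGraph (m + 4)))
        (({i | (i : ℕ) < 3} : Finset (Fin (m + 4))), ∅)
        (({i | (i : ℕ) < k} : Finset (Fin (m + 4))), H) := by
  induction k, hk3 using Nat.le_induction with
  | base => exact ⟨∅, by simp, .refl⟩
  | succ k hk3 ih =>
    obtain ⟨H, hH, hrel⟩ := ih (by omega)
    refine ⟨insert ⟨k - 2, by omega⟩ H, ?_,
      hrel.tail (cycleGraph_hopStep hk3 (by omega) hH)⟩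
    simp only [mem_insert, forall_eq_or_imp]
    exact ⟨by omega, fun i hi ↦ (hH i hi).trans (by omega)⟩

end CycleHopping

lemma hopFeasible_cycleGraph (n : ℕ) : HopFeasible (cycleGraph n) {i | (i : ℕ) < 3} := by
  rcases Nat.lt_or_ge n 4 with hn | hn
  · convert hopFeasible_univ (cycleGraph n)
    ext i
    simp only [mem_filter_univ, mem_univ, iff_true]
    omega
  · obtain ⟨m, rfl⟩ := Nat.exists_eq_add_of_le' hn
    obtain ⟨H, -, hrel⟩ := cycleGraph_reflTransGen_hopStep (m := m) (by omega) le_rfl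
    exact ⟨H, by simpa using hrel⟩

/-- For every integer $n \ge 3$, the hopping forcing number of the cycle
$C_n$ equals $3$. -/
theorem hopNumber_cycleGraph (n : ℕ) (hn : 3 ≤ n) :
    hopNumber (SimpleGraph.cycleGraph n) = 3 := by
  refine le_antisymm ?_ ?_
  · calc hopNumber (cycleGraph n) ≤ #{i : Fin n | (i : ℕ) < 3} :=
          hopNumber_le_card (hopFeasible_cycleGraph n)
      _ = 3 := by rw [Fin.card_filter_val_lt]; omega
  · calc 3 ≤ min n ((cycleGraph n).minDegree + 1) := by
          have := two_le_minDegree_cycleGraph hn; omega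
      _ ≤ hopNumber (cycleGraph n) := by
          simpa using min_card_minDegree_succ_le_hopNumber (G := cycleGraph n)
end

section
/- The constant c_d = (d−1)!·(d−2)^{d−1} / ∏_{i=1}^{d−1}(i(d−2)+1) satisfies c_d = 1 − Θ(log d / d) as d → ∞; that is, there exist constants c₁, c₂ > 0 and an integer d₀ ≥ 3 such that for all integers d ≥ d₀, 1 − c₂·(log d)/d ≤ c_d ≤ 1 − c₁·(log d)/d. In particular c_d → 1 as d → ∞. -/
/-!
Writing `t = d - 2`, each factor of `c_d` is `1 - x_i` with `x_i = 1 / (i t + 1)`, and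
`S = ∑_{i=1}^{d-1} x_i` is squeezed between `H_{d-1} / (d - 1)` and `H_{d-1} / (d - 2)`, hence is
`Θ(log d / d)` by the harmonic bounds `log d ≤ H_{d-1} ≤ 1 + log d`. The Weierstrass product
inequality `1 - S ≤ ∏ (1 - x_i)` and `∏ (1 - x_i) ≤ exp (-S)` transfer this to `c_d`.
-/

/-- The constant $c_d = \frac{(d-1)!\,(d-2)^{d-1}}{\prod_{i=1}^{d-1}(i(d-2)+1)}$. -/
noncomputable def cConst (d : ℕ) : ℝ :=
  (Nat.factorial (d - 1) : ℝ) * ((d : ℝ) - 2) ^ (d - 1) /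
    ∏ i ∈ Finset.Icc 1 (d - 1), ((i : ℝ) * ((d : ℝ) - 2) + 1)

open Finset Real Filter
open scoped Nat

theorem Finset.one_sub_sum_le_prod_one_sub {ι R : Type*} [CommRing R] [LinearOrder R]
    [IsStrictOrderedRing R] (s : Finset ι) {f : ι → R} (h0 : ∀ i ∈ s, 0 ≤ f i)
    (h1 : ∀ i ∈ s, f i ≤ 1) : 1 - ∑ i ∈ s, f i ≤ ∏ i ∈ s, (1 - f i) := by
  induction s using Finset.cons_induction with
  | empty => simp
  | cons a s _ ih =>
    simp only [mem_cons, forall_eq_or_imp] at h0 h1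
    rw [prod_cons, sum_cons]
    have hs : 0 ≤ ∑ i ∈ s, f i := sum_nonneg h0.2
    have key := mul_le_mul_of_nonneg_left (ih h0.2 h1.2) (sub_nonneg.2 h1.1)
    nlinarith [h0.1]

theorem Real.prod_one_sub_le_exp_neg_sum {ι : Type*} (s : Finset ι) {f : ι → ℝ}
    (h1 : ∀ i ∈ s, f i ≤ 1) : ∏ i ∈ s, (1 - f i) ≤ exp (-∑ i ∈ s, f i) := by
  rw [← sum_neg_distrib, exp_sum]
  exact prod_le_prod (fun i hi ↦ sub_nonneg.2 (h1 i hi))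
    fun i _ ↦ by linarith [add_one_le_exp (-f i)]

theorem Real.exp_neg_le_one_sub_half {y : ℝ} (h0 : 0 ≤ y) (h1 : y ≤ 1) :
    exp (-y) ≤ 1 - y / 2 := calc
  exp (-y) = (exp y)⁻¹ := exp_neg y
  _ ≤ (1 + y)⁻¹ := inv_anti₀ (by linarith) (by linarith [add_one_le_exp y])
  _ ≤ 1 - y / 2 := by rw [inv_le_iff_one_le_mul₀ (by linarith)]; nlinarith

theorem factorial_mul_pow_div_prod_eq_prod_one_sub (n : ℕ) {t : ℝ} (ht : 0 ≤ t) :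
    (n ! : ℝ) * t ^ n / ∏ i ∈ Icc 1 n, ((i : ℝ) * t + 1) =
      ∏ i ∈ Icc 1 n, (1 - 1 / ((i : ℝ) * t + 1)) := by
  have hnum : (n ! : ℝ) * t ^ n = ∏ i ∈ Icc 1 n, ((i : ℝ) * t) := by
    rw [prod_mul_distrib, prod_const, Nat.card_Icc, Nat.add_sub_cancel, ← Nat.cast_prod,
      ← prod_Ico_id_eq_factorial, Ico_add_one_right_eq_Icc]
  rw [hnum, ← prod_div_distrib]
  refine prod_congr rfl fun i _ ↦ ?_
  have : (i : ℝ) * t + 1 ≠ 0 := by positivity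
  field_simp
  ring

theorem sum_one_div_mul_add_one_le_harmonic_div (n : ℕ) {t : ℝ} (ht : 0 < t) :
    ∑ i ∈ Icc 1 n, 1 / ((i : ℝ) * t + 1) ≤ harmonic n / t := by
  rw [harmonic_eq_sum_Icc, Rat.cast_sum, sum_div]
  refine sum_le_sum fun i hi ↦ ?_
  have hi : (1 : ℝ) ≤ i := by exact_mod_cast (mem_Icc.1 hi).1
  rw [Rat.cast_inv, Rat.cast_natCast, inv_div_left, ← one_div]
  exact one_div_le_one_div_of_le (by positivity) (by linarith)

theorem harmonic_div_add_one_le_sum_one_div_mul_add_one (n : ℕ) {t : ℝ} (ht : 0 ≤ t) :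
    harmonic n / (t + 1) ≤ ∑ i ∈ Icc 1 n, 1 / ((i : ℝ) * t + 1) := by
  rw [harmonic_eq_sum_Icc, Rat.cast_sum, sum_div]
  refine sum_le_sum fun i hi ↦ ?_
  have hi : (1 : ℝ) ≤ i := by exact_mod_cast (mem_Icc.1 hi).1
  rw [Rat.cast_inv, Rat.cast_natCast, inv_div_left, ← one_div]
  exact one_div_le_one_div_of_le (by positivity) (by nlinarith)

theorem one_sub_harmonic_div_le_prod_one_sub (n : ℕ) {t : ℝ} (ht : 0 < t) :
    1 - harmonic n / t ≤ ∏ i ∈ Icc 1 n, (1 - 1 / ((i : ℝ) * t + 1)) :=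
  (sub_le_sub_left (sum_one_div_mul_add_one_le_harmonic_div n ht) 1).trans <|
    one_sub_sum_le_prod_one_sub _ (fun _ _ ↦ by positivity)
      fun _ _ ↦ div_le_one_of_le₀ (le_add_of_nonneg_left (by positivity)) (by positivity)

theorem prod_one_sub_le_exp_neg_harmonic_div (n : ℕ) {t : ℝ} (ht : 0 ≤ t) :
    ∏ i ∈ Icc 1 n, (1 - 1 / ((i : ℝ) * t + 1)) ≤ exp (-(harmonic n / (t + 1))) :=
  (prod_one_sub_le_exp_neg_sum _
    fun _ _ ↦ div_le_one_of_le₀ (le_add_of_nonneg_left (by positivity)) (by positivity)).trans <|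
    exp_le_exp.2 <| neg_le_neg <| harmonic_div_add_one_le_sum_one_div_mul_add_one n ht

theorem cConst_eq_prod {d : ℕ} (hd : 2 ≤ d) :
    cConst d = ∏ i ∈ Icc 1 (d - 1), (1 - 1 / ((i : ℝ) * ((d : ℝ) - 2) + 1)) :=
  factorial_mul_pow_div_prod_eq_prod_one_sub (d - 1)
    (sub_nonneg.2 (by exact_mod_cast hd : (2 : ℝ) ≤ d))

theorem one_sub_three_mul_log_div_le_cConst {d : ℕ} (hd : 6 ≤ d) :
    1 - 3 * log d / d ≤ cConst d := by
  have hd' : (6 : ℝ) ≤ d := by exact_mod_cast hd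
  have hlog : 1 ≤ log d := by
    rw [le_log_iff_exp_le (by linarith)]
    linarith [exp_one_lt_d9]
  have hH : (harmonic (d - 1) : ℝ) ≤ 1 + log d := calc
    _ ≤ 1 + log ((d - 1 : ℕ) : ℝ) := harmonic_le_one_add_log _
    _ ≤ 1 + log d := add_le_add_right
        (log_le_log (Nat.cast_pos.2 (by omega)) (Nat.cast_le.2 (d.sub_le 1))) 1
  have hratio : (1 + log d) / ((d : ℝ) - 2) ≤ 3 * log d / d := by
    rw [div_le_div_iff₀ (by linarith) (by linarith)]
    nlinarith
  calc 1 - 3 * log d / d ≤ 1 - (1 + log d) / ((d : ℝ) - 2) := by linarith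
    _ ≤ 1 - harmonic (d - 1) / ((d : ℝ) - 2) := by gcongr; linarith
    _ ≤ cConst d := by
        rw [cConst_eq_prod (by omega)]
        exact one_sub_harmonic_div_le_prod_one_sub _ (by linarith)

theorem cConst_le_one_sub_half_mul_log_div {d : ℕ} (hd : 2 ≤ d) :
    cConst d ≤ 1 - 1 / 2 * log d / d := by
  have hd' : (2 : ℝ) ≤ d := by exact_mod_cast hd
  have hlog : log d ≤ d := by linarith [log_le_sub_one_of_pos (by linarith : (0 : ℝ) < d)]
  have hH : log d ≤ harmonic (d - 1) := by
    simpa [Nat.sub_add_cancel (by omega : 1 ≤ d)] using log_add_one_le_harmonic (d - 1)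
  calc cConst d ≤ exp (-(harmonic (d - 1) / ((d : ℝ) - 2 + 1))) := by
        rw [cConst_eq_prod hd]
        exact prod_one_sub_le_exp_neg_harmonic_div _ (by linarith)
    _ ≤ exp (-(log d / d)) :=
        exp_le_exp.2 <| neg_le_neg <| div_le_div₀ ((log_nonneg (by linarith)).trans hH) hH
          (by linarith) (by linarith)
    _ ≤ 1 - 1 / 2 * log d / d := by
        convert exp_neg_le_one_sub_half (y := log d / d) (by positivity)
          ((div_le_one (by linarith)).2 hlog) using 1
        ring

theorem tendsto_one_sub_mul_log_div (c : ℝ) :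
    Tendsto (fun d : ℕ ↦ 1 - c * log d / d) atTop (nhds 1) := by
  have h := ((isLittleO_log_id_atTop.tendsto_div_nhds_zero.comp
    tendsto_natCast_atTop_atTop).const_mul c).const_sub 1
  simpa [mul_div_assoc] using h

/-- $c_d = 1 - \Theta(\log d / d)$ as $d \to \infty$: there are constants
$c_1, c_2 > 0$ and an integer $d_0 \ge 3$ such that
$1 - c_2 \log d / d \le c_d \le 1 - c_1 \log d / d$ for all $d \ge d_0$; in particular
$c_d \to 1$ as $d \to \infty$. -/
theorem cConst_asymptotics :
    (∃ c₁ c₂ : ℝ, 0 < c₁ ∧ 0 < c₂ ∧ ∃ d₀ : ℕ, 3 ≤ d₀ ∧ ∀ d : ℕ, d₀ ≤ d →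
      1 - c₂ * Real.log d / d ≤ cConst d ∧ cConst d ≤ 1 - c₁ * Real.log d / d) ∧
    Filter.Tendsto cConst Filter.atTop (nhds 1) := by
  refine ⟨⟨1 / 2, 3, by norm_num, by norm_num, 6, by norm_num, fun d hd ↦
    ⟨one_sub_three_mul_log_div_le_cConst hd,
      cConst_le_one_sub_half_mul_log_div (by omega : 2 ≤ d)⟩⟩, ?_⟩
  refine tendsto_of_tendsto_of_tendsto_of_le_of_le' (tendsto_one_sub_mul_log_div 3)
    (tendsto_one_sub_mul_log_div (1 / 2)) ?_ ?_
  · filter_upwards [eventually_ge_atTop 6] with d hd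
    exact one_sub_three_mul_log_div_le_cConst hd
  · filter_upwards [eventually_ge_atTop 2] with d hd
    exact cConst_le_one_sub_half_mul_log_div hd
end
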